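/- Let P be an n×n real symmetric idempotent matrix; let (Q_j)_{j∈J} be a finite mutually orthogonal family of n×n real symmetric idempotents with I_Q := Σ_{j∈J} Q_j, structure balanced in relation to P with efficiency factors (λ_j)_{j∈J}; and let (R_m)_{m∈M} be a finite mutually orthogonal family of n×n real symmetric idempotents with R_m·I_Q = R_m for all m, structure balanced in relation to each Q_j with efficiency factors (μ_{jm}). For k ∈ J with λ_k ≠ 0 set P▷Q_k := λ_k⁻¹·P·Q_k·P, and set P⊢𝒬 := P − Σ_{j : λ_j ≠ 0} P▷Q_j. Then: (ii) R_m·(P▷Q_k)·R_n = 0 whenever m ≠ n; and (iii) R_m·(P⊢𝒬)·R_n = 0 for all m, n ∈ M (including m = n). -/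

import Mathlib

/-!
Write `S = ∑ j, Q j`. Balance of `𝒬` with respect to `P` gives `S * P * Q k = λ_k • Q k`, and
symmetrically `Q k * P * S = λ_k • Q k`. Since every `R_m` lies under `S` (`R_m * S = R_m`, and
`S * R_m = R_m` by transposing), `P` can be traded for `S * P * S = ∑ j, λ_j • Q j` between any two
`R`'s. Hence `R_m (P Q_k P) R_n = λ_k² • R_m Q_k R_n`, which vanishes for `m ≠ n`, and
`R_m P R_n = ∑ j, λ_j • R_m Q_j R_n` is exactly what the pertaining projectors contribute, so the
residual is annihilated.
-/

open Matrix

section BalancedFamily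

variable {K A J : Type*} [CommSemiring K] [Semiring A] [Algebra K A] [Fintype J]
  {P : A} {Q : J → A} {lam : J → K}

theorem sum_mul_mul_eq_smul_of_balanced (hbal : ∀ j, Q j * P * Q j = lam j • Q j)
    (hadj : ∀ j k, j ≠ k → Q j * P * Q k = 0) (k : J) :
    (∑ j, Q j) * P * Q k = lam k • Q k := by
  rw [Finset.sum_mul, Finset.sum_mul,
    Finset.sum_eq_single k (fun j _ hj => hadj j k hj) (by simp)]
  exact hbal k

theorem mul_mul_sum_eq_smul_of_balanced (hbal : ∀ j, Q j * P * Q j = lam j • Q j)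
    (hadj : ∀ j k, j ≠ k → Q j * P * Q k = 0) (k : J) :
    Q k * P * ∑ j, Q j = lam k • Q k := by
  rw [Finset.mul_sum, Finset.sum_eq_single k (fun j _ hj => hadj k j hj.symm) (by simp)]
  exact hbal k

variable {R R' : A}

theorem balanced_sandwich_eq_sq_smul (hbal : ∀ j, Q j * P * Q j = lam j • Q j)
    (hadj : ∀ j k, j ≠ k → Q j * P * Q k = 0)
    (hR : R * ∑ j, Q j = R) (hR' : (∑ j, Q j) * R' = R') (k : J) :
    R * (P * Q k * P) * R' = (lam k * lam k) • (R * Q k * R') := by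
  have hleft : R * P * Q k = lam k • (R * Q k) :=
    calc R * P * Q k = R * ((∑ j, Q j) * P * Q k) := by rw [← mul_assoc, ← mul_assoc, hR]
      _ = lam k • (R * Q k) := by rw [sum_mul_mul_eq_smul_of_balanced hbal hadj, mul_smul_comm]
  have hright : Q k * P * R' = lam k • (Q k * R') :=
    calc Q k * P * R' = (Q k * P * ∑ j, Q j) * R' := by rw [mul_assoc (Q k * P), hR']
      _ = lam k • (Q k * R') := by rw [mul_mul_sum_eq_smul_of_balanced hbal hadj, smul_mul_assoc]
  calc R * (P * Q k * P) * R' = R * P * Q k * (P * R') := by simp only [mul_assoc]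
    _ = lam k • (R * (Q k * P * R')) := by rw [hleft, smul_mul_assoc]; simp only [mul_assoc]
    _ = (lam k * lam k) • (R * Q k * R') := by
      rw [hright, mul_smul_comm, smul_smul, mul_assoc]

theorem balanced_sandwich_eq_sum_smul (hbal : ∀ j, Q j * P * Q j = lam j • Q j)
    (hadj : ∀ j k, j ≠ k → Q j * P * Q k = 0)
    (hR : R * ∑ j, Q j = R) (hR' : (∑ j, Q j) * R' = R') :
    R * P * R' = ∑ j, lam j • (R * Q j * R') := by
  calc R * P * R' = R * ((∑ j, Q j) * P * ∑ j, Q j) * R' := by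
        conv_lhs => rw [← hR, ← hR']
        simp only [mul_assoc]
    _ = ∑ j, lam j • (R * Q j * R') := by
      rw [Finset.mul_sum,
        Finset.sum_congr rfl fun j _ => sum_mul_mul_eq_smul_of_balanced hbal hadj j,
        Finset.mul_sum, Finset.sum_mul]
      simp only [mul_smul_comm, smul_mul_assoc]

end BalancedFamily

section Residual

variable {K A J : Type*} [Field K] [Ring A] [Algebra K A] [Fintype J]
  {P : A} {Q : J → A} {lam : J → K} {R R' : A}

theorem balanced_sandwich_residual_eq_zero [DecidableEq K]
    (hbal : ∀ j, Q j * P * Q j = lam j • Q j) (hadj : ∀ j k, j ≠ k → Q j * P * Q k = 0)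
    (hR : R * ∑ j, Q j = R) (hR' : (∑ j, Q j) * R' = R') :
    R * (P - ∑ j ∈ Finset.univ.filter (fun j => lam j ≠ 0), (lam j)⁻¹ • (P * Q j * P)) * R'
      = 0 := by
  have hpertaining : R * (∑ j ∈ Finset.univ.filter (fun j => lam j ≠ 0),
      (lam j)⁻¹ • (P * Q j * P)) * R' = ∑ j, lam j • (R * Q j * R') := by
    rw [Finset.mul_sum, Finset.sum_mul]
    refine (Finset.sum_congr rfl fun j hj => ?_).trans
      (Finset.sum_filter_of_ne fun j _ hj => ?_)
    · rw [mul_smul_comm, smul_mul_assoc, balanced_sandwich_eq_sq_smul hbal hadj hR hR', smul_smul,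
        ← mul_assoc, inv_mul_cancel₀ (Finset.mem_filter.mp hj).2, one_mul]
    · exact left_ne_zero_of_smul hj
  rw [mul_sub, sub_mul, hpertaining, balanced_sandwich_eq_sum_smul hbal hadj hR hR', sub_self]

end Residual

open scoped Classical in
theorem structure_balance_wrt_combined_decomposition_general
    {n : ℕ} {J M : Type*} [Fintype J]
    (P : Matrix (Fin n) (Fin n) ℝ)
    (Q : J → Matrix (Fin n) (Fin n) ℝ)
    (hQsym : ∀ j, (Q j)ᵀ = Q j)
    (lam : J → ℝ)
    (hbalQ : ∀ j, Q j * P * Q j = lam j • Q j)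
    (hadjQ : ∀ j k, j ≠ k → Q j * P * Q k = 0)
    (R : M → Matrix (Fin n) (Fin n) ℝ)
    (hRsym : ∀ m, (R m)ᵀ = R m)
    (hRsub : ∀ m, R m * (∑ j, Q j) = R m)
    (hadjR : ∀ j m m', m ≠ m' → R m * Q j * R m' = 0) :
    (∀ k, lam k ≠ 0 → ∀ m m', m ≠ m' →
        R m * ((lam k)⁻¹ • (P * Q k * P)) * R m' = 0) ∧
      (∀ m m', R m *
          (P - ∑ j ∈ Finset.univ.filter (fun j => lam j ≠ 0),
            (lam j)⁻¹ • (P * Q j * P)) * R m' = 0) := by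
  have hsubL : ∀ m, (∑ j, Q j) * R m = R m := fun m => by
    simpa [transpose_mul, transpose_sum, hQsym, hRsym] using congrArg transpose (hRsub m)
  refine ⟨fun k _ m m' hmm' => ?_, fun m m' =>
    balanced_sandwich_residual_eq_zero hbalQ hadjQ (hRsub m) (hsubL m')⟩
  rw [mul_smul_comm, smul_mul_assoc,
    balanced_sandwich_eq_sq_smul hbalQ hadjQ (hRsub m) (hsubL m') k, hadjR k m m' hmm',
    smul_zero, smul_zero]

open scoped Classical in
/-- Conditions (ii) and (iii) in the proof of Theorem 5.1(b): the family `(R_m)`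
satisfies adjusted orthogonality with respect to each pertaining projector
`P ▷ Q_k`, and has efficiency factor 0 on the residual `P ⊢ 𝒬`. -/
theorem structure_balance_wrt_combined_decomposition
    {n : ℕ} {J M : Type*} [Fintype J] [Fintype M]
    (P : Matrix (Fin n) (Fin n) ℝ) (hPsym : Pᵀ = P) (hPidem : P * P = P)
    (Q : J → Matrix (Fin n) (Fin n) ℝ)
    (hQsym : ∀ j, (Q j)ᵀ = Q j) (hQidem : ∀ j, Q j * Q j = Q j)
    (hQorth : ∀ j k, j ≠ k → Q j * Q k = 0)
    (lam : J → ℝ)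
    (hbalQ : ∀ j, Q j * P * Q j = lam j • Q j)
    (hadjQ : ∀ j k, j ≠ k → Q j * P * Q k = 0)
    (R : M → Matrix (Fin n) (Fin n) ℝ)
    (hRsym : ∀ m, (R m)ᵀ = R m) (hRidem : ∀ m, R m * R m = R m)
    (hRorth : ∀ m m', m ≠ m' → R m * R m' = 0)
    (hRsub : ∀ m, R m * (∑ j, Q j) = R m)
    (mu : J → M → ℝ)
    (hbalR : ∀ j m, R m * Q j * R m = mu j m • R m)
    (hadjR : ∀ j m m', m ≠ m' → R m * Q j * R m' = 0) :
    (∀ k, lam k ≠ 0 → ∀ m m', m ≠ m' →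
        R m * ((lam k)⁻¹ • (P * Q k * P)) * R m' = 0) ∧
      (∀ m m', R m *
          (P - ∑ j ∈ Finset.univ.filter (fun j => lam j ≠ 0),
            (lam j)⁻¹ • (P * Q j * P)) * R m' = 0) :=
  structure_balance_wrt_combined_decomposition_general P Q hQsym lam hbalQ hadjQ R hRsym hRsub hadjR
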